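/- arXiv:math/0612003 — 4 statements merged into one kernel-verified Lean document; each statement's English description precedes it below -/
import Mathlib

section
/- Let G = (V,E) be a finite connected simple graph, let v0 be a vertex, and let δ : V → ℕ be a function with Σ_{v∈V} δ(v) = |E|. Then δ is the outdegree function of some v0-connected orientation of G if and only if exc_δ(U) ≥ 0 for every subset U ⊆ V and exc_δ(U) > 0 for every proper subset U ⊊ V containing v0. -/
/-- An orientation of a simple graph: a choice of direction for each edge. -/
structure GraphOrientation {V : Type*} (G : SimpleGraph V) where
  dir : V → V → Prop
  adj_of_dir : ∀ u v, dir u v → G.Adj u v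
  dir_iff_not : ∀ u v, G.Adj u v → (dir u v ↔ ¬ dir v u)

namespace GraphOrientation

variable {V : Type*} {G : SimpleGraph V}

/-- The outdegree of a vertex: the number of edges directed away from it. -/
noncomputable def outDegree (O : GraphOrientation G) (v : V) : ℕ :=
  {u | O.dir v u}.ncard

/-- `v` is reachable from `u` by a directed path. -/
def Reaches (O : GraphOrientation G) : V → V → Prop :=
  Relation.ReflTransGen O.dir

/-- `C` is the edge set of a directed cycle of the orientation. -/
def IsDirCycle (O : GraphOrientation G) (C : Set (Sym2 V)) : Prop :=
  ∃ (v : V) (w : G.Walk v v), w.IsCycle ∧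
    (∀ d ∈ w.darts, O.dir d.toProd.1 d.toProd.2) ∧ C = {e | e ∈ w.edges}

/-- The orientation is strongly connected. -/
def IsStronglyConnected (O : GraphOrientation G) : Prop := ∀ u v, O.Reaches u v

/-- Every vertex is reachable from `v0`. -/
def IsConnectedFrom (O : GraphOrientation G) (v0 : V) : Prop := ∀ v, O.Reaches v0 v

/-- The set of edges on which two orientations differ. -/
def diffSet (O O' : GraphOrientation G) : Set (Sym2 V) :=
  {e | ∃ a b, e = s(a, b) ∧ O.dir a b ∧ O'.dir b a}

/-- `O'` is obtained from `O` by reversing exactly the edges of `A`. -/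
def IsFlipOn (O O' : GraphOrientation G) (A : Set (Sym2 V)) : Prop :=
  (∀ u v, s(u, v) ∈ A → (O'.dir u v ↔ O.dir v u)) ∧
    (∀ u v, s(u, v) ∉ A → (O'.dir u v ↔ O.dir u v))

/-- One cycle-flip step. -/
def CycleFlip (O O' : GraphOrientation G) : Prop :=
  ∃ C, O.IsDirCycle C ∧ O.IsFlipOn O' C

end GraphOrientation

/-- The cut defined by a vertex subset `U`: edges with exactly one endpoint in `U`. -/
def SimpleGraph.cutSet {V : Type*} (G : SimpleGraph V) (U : Set V) : Set (Sym2 V) :=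
  {e | ∃ a b, e = s(a, b) ∧ G.Adj a b ∧ a ∈ U ∧ b ∉ U}

/-- A cocycle: a minimal nonempty cut. -/
def SimpleGraph.IsCocycle {V : Type*} (G : SimpleGraph V) (D : Set (Sym2 V)) : Prop :=
  D.Nonempty ∧ (∃ U : Set V, D = G.cutSet U) ∧
    ∀ D' : Set (Sym2 V), D'.Nonempty → (∃ U : Set V, D' = G.cutSet U) → D' ⊆ D → D' = D

/-- A directed cocycle: a cocycle all of whose edges are directed toward the same side. -/
def GraphOrientation.IsDirCocycle {V : Type*} {G : SimpleGraph V}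
    (O : GraphOrientation G) (D : Set (Sym2 V)) : Prop :=
  G.IsCocycle D ∧ ∃ U : Set V, D = G.cutSet U ∧ ∀ a b, O.dir a b → s(a, b) ∈ D → b ∈ U

/-- The excess of a subset of vertices with respect to `δ : V → ℕ`. -/
noncomputable def SimpleGraph.excess {V : Type*} (G : SimpleGraph V) (δ : V → ℕ)
    (U : Finset V) : ℤ :=
  (∑ u ∈ U, (δ u : ℤ)) - ({e | e ∈ G.edgeSet ∧ ∀ x ∈ e, x ∈ U} : Set (Sym2 V)).ncard

/-- `C` is the edge set of a cycle of `G`. -/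
def SimpleGraph.IsCycleEdgeSet {V : Type*} (G : SimpleGraph V) (C : Set (Sym2 V)) : Prop :=
  ∃ (v : V) (w : G.Walk v v), w.IsCycle ∧ C = {e | e ∈ w.edges}

/-- The number of connected components of the spanning subgraph `(V, S)`. -/
noncomputable def numComponents (V : Type*) (S : Set (Sym2 V)) : ℕ :=
  Nat.card (SimpleGraph.fromEdgeSet S).ConnectedComponent

/-! For every orientation `O`, the excess of `U` with respect to the outdegree function of `O`
is the number of edges directed out of `U`: in `∑_{u ∈ U} outdeg u` every edge inside `U` is
counted once, every edge directed out of `U` once, and no other edge. So the excess conditions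
say that every proper subset containing `v0` has an outgoing edge, which is `v0`-connectivity.
Realising `δ` as an outdegree function at all means choosing a tail for each edge with at most
`δ v` edges at each `v`; this is a Hall problem whose Hall condition is `exc_δ(U) ≥ 0`, and
`∑ δ = |E|` forces every bound to be attained. -/

open Finset

theorem Finset.exists_fiber_card_le_of_forall_card_le_sum {ι α : Type*} [Fintype ι]
    [DecidableEq α] (t : ι → Finset α) (c : α → ℕ)
    (h : ∀ s : Finset ι, #s ≤ ∑ a ∈ s.biUnion t, c a) :
    ∃ f : ι → α, (∀ i, f i ∈ t i) ∧ ∀ a, #{i | f i = a} ≤ c a := by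
  -- Hall's theorem for the family obtained by replacing each `a` by `c a` copies of it.
  let slots (s : Finset α) : Finset (Σ a, Fin (c a)) := s.sigma fun _ => univ
  have card_slots (s : Finset α) : #(slots s) = ∑ a ∈ s, c a := by simp [slots]
  obtain ⟨g, hg_inj, hg_mem⟩ :=
    (all_card_le_biUnion_card_iff_exists_injective fun i => slots (t i)).mp fun s => by
      have : s.biUnion (fun i => slots (t i)) = slots (s.biUnion t) := by ext; simp [slots]
      rw [this, card_slots]
      exact h s
  refine ⟨fun i => (g i).1, fun i => by simpa [slots] using hg_mem i, fun a => ?_⟩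
  calc #{i | (g i).1 = a} ≤ #(slots {a}) :=
        card_le_card_of_injOn g (fun i hi => by simpa [slots] using hi) hg_inj.injOn
    _ = c a := by simp [card_slots]

theorem SimpleGraph.excess_nonneg_iff {V : Type*} (G : SimpleGraph V) (δ : V → ℕ)
    (U : Finset V) :
    0 ≤ G.excess δ U ↔
      {e | e ∈ G.edgeSet ∧ ∀ x ∈ e, x ∈ U}.ncard ≤ ∑ u ∈ U, δ u := by
  rw [excess, sub_nonneg, ← Nat.cast_sum, Nat.cast_le]

theorem SimpleGraph.card_le_sum_biUnion_of_excess_nonneg {V : Type*} [Finite V]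
    [DecidableEq V] {G : SimpleGraph V} {δ : V → ℕ}
    (hexc : ∀ U : Finset V, 0 ≤ G.excess δ U) (s : Finset G.edgeSet) :
    #s ≤ ∑ v ∈ s.biUnion (fun e => (e : Sym2 V).toFinset), δ v := by
  set U := s.biUnion fun e => (e : Sym2 V).toFinset
  calc #s = (Subtype.val '' (s : Set G.edgeSet)).ncard := by
        rw [Subtype.val_injective.injOn.ncard_image, Set.ncard_coe_finset]
    _ ≤ {e | e ∈ G.edgeSet ∧ ∀ x ∈ e, x ∈ U}.ncard := by
        refine Set.ncard_le_ncard ?_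
        rintro _ ⟨e, he, rfl⟩
        exact ⟨e.2, fun x hx => mem_biUnion.mpr ⟨e, he, Sym2.mem_toFinset.mpr hx⟩⟩
    _ ≤ ∑ v ∈ U, δ v := (G.excess_nonneg_iff δ U).mp (hexc U)

namespace GraphOrientation

variable {V : Type*} {G : SimpleGraph V} (O : GraphOrientation G)

theorem asymm {a b : V} (h : O.dir a b) : ¬ O.dir b a :=
  (O.dir_iff_not a b (O.adj_of_dir a b h)).mp h

theorem dir_or_dir {a b : V} (h : G.Adj a b) : O.dir a b ∨ O.dir b a := by
  by_cases hab : O.dir a b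
  · exact .inl hab
  · exact .inr (not_not.mp (mt (O.dir_iff_not a b h).mpr hab))

def leavingEdges (U : Set V) : Set (Sym2 V) :=
  {e | ∃ a b, e = s(a, b) ∧ O.dir a b ∧ a ∈ U ∧ b ∉ U}

theorem leavingEdges_nonempty_of_reaches {U : Set V} {x y : V} (h : O.Reaches x y)
    (hx : x ∈ U) (hy : y ∉ U) : (O.leavingEdges U).Nonempty := by
  induction h with
  | refl => exact absurd hx hy
  | @tail b c _ hbc ih =>
    by_cases hb : b ∈ U
    · exact ⟨_, b, c, rfl, hbc, hb, hy⟩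
    · exact ih hb

theorem isConnectedFrom_iff [Fintype V] (v0 : V) :
    O.IsConnectedFrom v0 ↔
      ∀ U : Finset V, U ≠ univ → v0 ∈ U → (O.leavingEdges U).Nonempty := by
  classical
  refine ⟨fun h U hU hv0 => ?_, fun h => ?_⟩
  · obtain ⟨w, hw⟩ : ∃ w, w ∉ U := by simpa [eq_univ_iff_forall] using hU
    exact O.leavingEdges_nonempty_of_reaches (h w) hv0 hw
  · by_contra hcon
    have hR : ({v | O.Reaches v0 v} : Finset V) ≠ univ := by
      simpa [eq_univ_iff_forall, IsConnectedFrom] using hcon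
    obtain ⟨_, a, b, rfl, hab, ha, hb⟩ := h _ hR (mem_filter.mpr ⟨mem_univ _, .refl⟩)
    simp only [coe_filter, mem_univ, true_and, Set.mem_ofPred_eq] at ha hb
    exact hb (ha.tail hab)

theorem sum_outDegree_eq_ncard_arcs [Fintype V] (U : Finset V) :
    ∑ u ∈ U, O.outDegree u = {p : V × V | p.1 ∈ U ∧ O.dir p.1 p.2}.ncard := by
  classical
  have harcs : {p : V × V | p.1 ∈ U ∧ O.dir p.1 p.2} =
      ↑((U ×ˢ univ).filter fun p => O.dir p.1 p.2) := by
    ext; simp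
  rw [harcs, Set.ncard_coe_finset, card_filter, sum_product]
  refine sum_congr rfl fun u _ => ?_
  rw [← card_filter, outDegree, ← Set.ncard_coe_finset]
  simp

theorem ncard_arcs_eq_add [Finite V] (U : Set V) :
    {p : V × V | p.1 ∈ U ∧ O.dir p.1 p.2}.ncard =
      {e | e ∈ G.edgeSet ∧ ∀ x ∈ e, x ∈ U}.ncard + (O.leavingEdges U).ncard := by
  have hinj : Set.InjOn (fun p : V × V => s(p.1, p.2)) {p | p.1 ∈ U ∧ O.dir p.1 p.2} := by
    rintro ⟨a, b⟩ ⟨-, hab⟩ ⟨c, d⟩ ⟨-, hcd⟩ h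
    rcases Sym2.eq_iff.mp h with ⟨rfl, rfl⟩ | ⟨rfl, rfl⟩
    · rfl
    · exact absurd hcd (O.asymm hab)
  have himage : (fun p : V × V => s(p.1, p.2)) '' {p | p.1 ∈ U ∧ O.dir p.1 p.2} =
      {e | e ∈ G.edgeSet ∧ ∀ x ∈ e, x ∈ U} ∪ O.leavingEdges U := by
    refine Set.Subset.antisymm ?_ ?_
    · rintro _ ⟨⟨a, b⟩, ⟨ha, hab⟩, rfl⟩
      by_cases hb : b ∈ U
      · exact .inl ⟨O.adj_of_dir a b hab, by simp [ha, hb]⟩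
      · exact .inr ⟨a, b, rfl, hab, ha, hb⟩
    · rintro e (⟨he, hU⟩ | ⟨a, b, rfl, hab, ha, -⟩)
      · induction e using Sym2.ind with
        | _ a b =>
          rcases O.dir_or_dir he with hab | hba
          · exact ⟨(a, b), ⟨hU a (by simp), hab⟩, rfl⟩
          · exact ⟨(b, a), ⟨hU b (by simp), hba⟩, Sym2.eq_swap⟩
      · exact ⟨(a, b), ⟨ha, hab⟩, rfl⟩
  have hdisj : Disjoint {e | e ∈ G.edgeSet ∧ ∀ x ∈ e, x ∈ U} (O.leavingEdges U) := by
    rw [Set.disjoint_left]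
    rintro _ ⟨-, hU⟩ ⟨a, b, rfl, -, -, hb⟩
    exact hb (hU b (by simp))
  rw [← hinj.ncard_image, himage, Set.ncard_union_eq hdisj]

theorem excess_outDegree [Fintype V] (U : Finset V) :
    G.excess O.outDegree U = (O.leavingEdges U).ncard := by
  have h := O.ncard_arcs_eq_add (U : Set V)
  simp only [mem_coe] at h
  rw [SimpleGraph.excess, ← Nat.cast_sum, O.sum_outDegree_eq_ncard_arcs, h]
  push_cast
  ring

theorem excess_outDegree_pos_iff [Fintype V] (U : Finset V) :
    0 < G.excess O.outDegree U ↔ (O.leavingEdges U).Nonempty := by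
  rw [excess_outDegree, Nat.cast_pos, Set.ncard_pos]

section ofTail

variable (t : G.edgeSet → V) (ht : ∀ e : G.edgeSet, t e ∈ (e : Sym2 V))

def ofTail : GraphOrientation G where
  dir a b := ∃ h : G.Adj a b, t ⟨s(a, b), h⟩ = a
  adj_of_dir _ _ h := h.1
  dir_iff_not a b h := by
    have hswap : (⟨s(b, a), h.symm⟩ : G.edgeSet) = ⟨s(a, b), h⟩ := Subtype.ext Sym2.eq_swap
    simp only [h, h.symm, exists_true_left, hswap]
    rcases Sym2.mem_iff.mp (ht ⟨s(a, b), h⟩) with hta | htb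
    · simp [hta, h.ne]
    · simp [htb, h.ne.symm]

theorem outDegree_ofTail (v : V) :
    (ofTail t ht).outDegree v = {e | t e = v}.ncard := by
  refine Set.ncard_congr (fun u hu => ⟨s(v, u), hu.1⟩) (fun u hu => hu.2)
    (fun u₁ u₂ _ _ h => Sym2.congr_right.mp (congrArg Subtype.val h)) ?_
  rintro ⟨e, he⟩ (hte : t ⟨e, he⟩ = v)
  obtain ⟨u, rfl⟩ := Sym2.mem_iff_exists.mp (hte ▸ ht ⟨e, he⟩)
  exact ⟨u, ⟨he, hte⟩, rfl⟩

end ofTail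

theorem exists_outDegree_eq [Fintype V] {δ : V → ℕ} (hsum : ∑ v, δ v = G.edgeSet.ncard)
    (hexc : ∀ U : Finset V, 0 ≤ G.excess δ U) :
    ∃ O : GraphOrientation G, O.outDegree = δ := by
  classical
  obtain ⟨t, ht, hfiber⟩ := Finset.exists_fiber_card_le_of_forall_card_le_sum
    (fun e : G.edgeSet => (e : Sym2 V).toFinset) δ (G.card_le_sum_biUnion_of_excess_nonneg hexc)
  refine ⟨ofTail t fun e => Sym2.mem_toFinset.mp (ht e), funext fun v => ?_⟩
  -- the fibres of `t` have total size `|E| = ∑ δ`, so none of the bounds `hfiber` is strict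
  have htotal : ∑ v, #{e | t e = v} = ∑ v, δ v := by
    rw [hsum, ← card_eq_sum_card_fiberwise (f := t) (t := univ) fun _ _ => mem_univ _, card_univ,
      ← Nat.card_eq_fintype_card, Nat.card_coe_set_eq]
  rw [outDegree_ofTail, ← (sum_eq_sum_iff_of_le fun v _ => hfiber v).mp htotal v (mem_univ v),
    ← Set.ncard_coe_finset, coe_filter]
  simp

end GraphOrientation

theorem statement3_general {V : Type*} [Fintype V] (G : SimpleGraph V)
    (v0 : V) (δ : V → ℕ) (hsum : ∑ v, δ v = G.edgeSet.ncard) :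
    (∃ O : GraphOrientation G, O.IsConnectedFrom v0 ∧ O.outDegree = δ) ↔
      ((∀ U : Finset V, 0 ≤ G.excess δ U) ∧
        ∀ U : Finset V, U ≠ Finset.univ → v0 ∈ U → 0 < G.excess δ U) := by
  constructor
  · rintro ⟨O, hO, rfl⟩
    refine ⟨fun U => ?_, fun U hU hv0 => ?_⟩
    · rw [O.excess_outDegree]
      positivity
    · exact (O.excess_outDegree_pos_iff U).mpr ((O.isConnectedFrom_iff v0).mp hO U hU hv0)
  · rintro ⟨hnonneg, hpos⟩
    obtain ⟨O, rfl⟩ := GraphOrientation.exists_outDegree_eq hsum hnonneg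
    exact ⟨O, (O.isConnectedFrom_iff v0).mpr fun U hU hv0 =>
      (O.excess_outDegree_pos_iff U).mp (hpos U hU hv0), rfl⟩

theorem statement3 {V : Type*} [Fintype V] (G : SimpleGraph V) (hG : G.Connected)
    (v0 : V) (δ : V → ℕ) (hsum : ∑ v, δ v = G.edgeSet.ncard) :
    (∃ O : GraphOrientation G, O.IsConnectedFrom v0 ∧ O.outDegree = δ) ↔
      ((∀ U : Finset V, 0 ≤ G.excess δ U) ∧
        ∀ U : Finset V, U ≠ Finset.univ → v0 ∈ U → 0 < G.excess δ U) :=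
  statement3_general G v0 δ hsum
end

section
/- (Elimination) Let G = (V,E) be a finite simple graph, let O be an orientation of G, let C and C' be (edge sets of) O-directed cycles, and let O' be the orientation obtained from O by reversing the direction of every edge of C'. Then the symmetric difference C △ C' is a union of O'-directed cycles, and in particular every edge of C lies in an O'-directed cycle whose edge set is contained in C ∪ C'. -/
/-! Encode a directed cycle by its set of arcs (ordered pairs); such a set is balanced: every
vertex has as many outgoing as incoming arcs. Let `P` be the arcs of `C` and `Q` the reversed arcs
of `C'`, which are `O'`-directed. An edge of `C ∩ C'` occurs in `P ∪ Q` in both directions;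
deleting these antiparallel pairs leaves a balanced set of `O'`-directed arcs whose underlying
edges are exactly `C △ C'`. A nonempty balanced set of `O'`-directed arcs contains a closed walk,
hence an `O'`-directed cycle, and removing that cycle keeps the set balanced, so by induction it
is a union of `O'`-directed cycles. Finally an edge of `C ∩ C'` lies on `C'`, which is itself
`O'`-directed once reversed. -/

theorem List.Nodup.ncard_setOf_mem_eq_count {V : Type*} [DecidableEq V] {L : List (V × V)}
    (hL : L.Nodup) (v : V) : {b | (v, b) ∈ L}.ncard = (L.map Prod.fst).count v := by
  induction L with
  | nil => simp
  | cons p L ih =>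
    obtain ⟨hpL, hL'⟩ := List.nodup_cons.1 hL
    obtain ⟨a, b⟩ := p
    by_cases ha : a = v
    · subst ha
      have hfin : {c | (a, c) ∈ L}.Finite :=
        (L.finite_toSet.image Prod.snd).subset fun c hc => ⟨_, hc, rfl⟩
      have : {c | (a, c) ∈ (a, b) :: L} = insert b {c | (a, c) ∈ L} := by ext; simp
      rw [this, Set.ncard_insert_of_notMem (s := {c | (a, c) ∈ L}) hpL hfin, ih hL']
      simp
    · have : {c | (v, c) ∈ (a, b) :: L} = {c | (v, c) ∈ L} := by ext; simp [Ne.symm ha]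
      rw [this, ih hL']
      simp [ha]

namespace Set

variable {V : Type*}

def IsBalanced (A : Set (V × V)) : Prop :=
  ∀ v, {b | (v, b) ∈ A}.ncard = {a | (a, v) ∈ A}.ncard

theorem isBalanced_inter_preimage_swap (A : Set (V × V)) :
    (A ∩ Prod.swap ⁻¹' A).IsBalanced := fun v => by
  congr 1
  ext
  simp [and_comm]

theorem isBalanced_setOf_mem_of_perm {L : List (V × V)} (hL : L.Nodup)
    (hperm : (L.map Prod.fst).Perm (L.map Prod.snd)) : {p | p ∈ L}.IsBalanced := fun v => by
  classical
  have hswap : {a | (a, v) ∈ L} = {a | (v, a) ∈ L.map Prod.swap} := by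
    ext; simp
  change {b | (v, b) ∈ L}.ncard = {a | (a, v) ∈ L}.ncard
  rw [hswap, hL.ncard_setOf_mem_eq_count, (hL.map Prod.swap_injective).ncard_setOf_mem_eq_count,
    List.map_map, hperm.count_eq]
  rfl

namespace IsBalanced

variable [Finite V] {A B : Set (V × V)}

theorem union (hA : A.IsBalanced) (hB : B.IsBalanced) (hAB : Disjoint A B) :
    (A ∪ B).IsBalanced := fun v => by
  have hout : Disjoint {b | (v, b) ∈ A} {b | (v, b) ∈ B} :=
    disjoint_left.2 fun _ hA hB => disjoint_left.1 hAB hA hB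
  have hin : Disjoint {a | (a, v) ∈ A} {a | (a, v) ∈ B} :=
    disjoint_left.2 fun _ hA hB => disjoint_left.1 hAB hA hB
  change ({b | (v, b) ∈ A} ∪ {b | (v, b) ∈ B}).ncard = ({a | (a, v) ∈ A} ∪ {a | (a, v) ∈ B}).ncard
  rw [ncard_union_eq hout, ncard_union_eq hin, hA v, hB v]

theorem sdiff (hA : A.IsBalanced) (hB : B.IsBalanced) (hBA : B ⊆ A) :
    (A \ B).IsBalanced := fun v => by
  have hout : {b | (v, b) ∈ B} ⊆ {b | (v, b) ∈ A} := fun _ h => hBA h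
  have hin : {a | (a, v) ∈ B} ⊆ {a | (a, v) ∈ A} := fun _ h => hBA h
  change ({b | (v, b) ∈ A} \ {b | (v, b) ∈ B}).ncard = ({a | (a, v) ∈ A} \ {a | (a, v) ∈ B}).ncard
  rw [ncard_sdiff hout, ncard_sdiff hin, hA v, hB v]

theorem sdiff_preimage_swap (hA : A.IsBalanced) : (A \ Prod.swap ⁻¹' A).IsBalanced := by
  simpa only [sdiff_self_inter] using
    hA.sdiff (isBalanced_inter_preimage_swap A) inter_subset_left

theorem exists_mem_of_mem (hA : A.IsBalanced) {a v : V} (h : (a, v) ∈ A) : ∃ b, (v, b) ∈ A := by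
  have : 0 < {b | (v, b) ∈ A}.ncard := hA v ▸ (ncard_pos (toFinite _)).2 ⟨a, h⟩
  exact (ncard_pos (toFinite _)).1 this

end IsBalanced

end Set

theorem Sym2.mk_mem_image_uncurry_mk {α : Type*} {A : Set (α × α)} {a b : α} :
    s(a, b) ∈ Sym2.mk.uncurry '' A ↔ (a, b) ∈ A ∨ (b, a) ∈ A := by
  simp only [Set.mem_image, Prod.exists, Function.uncurry_apply_pair, Sym2.eq_iff]
  aesop

theorem Sym2.image_uncurry_mk_union_sdiff_preimage_swap {V : Type*} {P Q : Set (V × V)}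
    (hP : Disjoint P (Prod.swap ⁻¹' P)) (hQ : Disjoint Q (Prod.swap ⁻¹' Q)) (hPQ : Disjoint P Q) :
    Sym2.mk.uncurry '' ((P ∪ Q) \ Prod.swap ⁻¹' (P ∪ Q)) =
      symmDiff (Sym2.mk.uncurry '' P) (Sym2.mk.uncurry '' Q) := by
  ext e
  induction e using Sym2.ind with | _ a b =>
  have := hP.notMem_of_mem_left (a := (a, b))
  have := hQ.notMem_of_mem_left (a := (a, b))
  have := hPQ.notMem_of_mem_left (a := (a, b))
  have := hPQ.notMem_of_mem_left (a := (b, a))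
  simp only [Sym2.mk_mem_image_uncurry_mk, Set.mem_symmDiff, Set.mem_sdiff, Set.mem_union,
    Set.mem_preimage, Prod.swap_prod_mk] at *
  tauto

namespace SimpleGraph.Walk

variable {V : Type*} {G : SimpleGraph V}

def arcSet {u v : V} (w : G.Walk u v) : Set (V × V) := {p | ∃ d ∈ w.darts, d.toProd = p}

theorem image_uncurry_mk_arcSet {u v : V} (w : G.Walk u v) :
    Sym2.mk.uncurry '' w.arcSet = w.edgeSet := by
  ext e
  simp [arcSet, edgeSet, edges, Dart.edge, Function.uncurry]

theorem perm_map_fst_map_snd_darts {u : V} (w : G.Walk u u) :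
    (w.darts.map (·.fst)).Perm (w.darts.map (·.snd)) := by
  have h := List.perm_append_singleton u (w.darts.map (·.fst))
  rw [w.map_fst_darts_append, ← w.cons_tail_support, ← w.map_snd_darts] at h
  exact h.cons_inv.symm

theorem IsTrail.isBalanced_arcSet {u : V} {w : G.Walk u u} (hw : w.IsTrail) :
    w.arcSet.IsBalanced := by
  have hL : (w.darts.map Dart.toProd).Nodup :=
    (hw.edges_nodup.of_map _).map Dart.toProd_injective
  have hperm : ((w.darts.map Dart.toProd).map Prod.fst).Perm
      ((w.darts.map Dart.toProd).map Prod.snd) := by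
    rw [List.map_map, List.map_map]
    exact w.perm_map_fst_map_snd_darts
  convert Set.isBalanced_setOf_mem_of_perm hL hperm using 1
  ext
  simp [arcSet]

theorem exists_closedWalk_of_isBalanced [Finite V] {A : Set (V × V)}
    (hadj : ∀ p ∈ A, G.Adj p.1 p.2) (hA : A.IsBalanced) (hne : A.Nonempty) :
    ∃ (u : V) (w : G.Walk u u), ¬ w.Nil ∧ ∀ d ∈ w.darts, d.toProd ∈ A := by
  by_contra hno
  -- Otherwise "reachable by a nonempty walk in `A`" is a strict order on the finite `V`; a
  -- minimal vertex with an incoming arc would have no outgoing one.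
  let r : V → V → Prop := fun x y => ∃ w : G.Walk y x, ¬ w.Nil ∧ ∀ d ∈ w.darts, d.toProd ∈ A
  have : IsTrans V r := ⟨fun _ _ _ ⟨w₁, hw₁, hA₁⟩ ⟨w₂, hw₂, hA₂⟩ =>
    ⟨w₂.append w₁, by simp [hw₂], by simpa [or_imp, forall_and] using ⟨hA₂, hA₁⟩⟩⟩
  have : Std.Irrefl r := ⟨fun u ⟨w, hw, hwA⟩ => hno ⟨u, w, hw, hwA⟩⟩
  obtain ⟨⟨a₀, v₀⟩, h₀⟩ := hne
  obtain ⟨m, ⟨a, ham⟩, hmin⟩ :=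
    (Finite.wellFounded_of_trans_of_irrefl r).has_min {v | ∃ a, (a, v) ∈ A} ⟨v₀, a₀, h₀⟩
  obtain ⟨b, hmb⟩ := hA.exists_mem_of_mem ham
  exact hmin b ⟨m, hmb⟩ ⟨.cons (hadj _ hmb) .nil, by simp, by simpa using hmb⟩

end SimpleGraph.Walk

namespace GraphOrientation

open SimpleGraph

variable {V : Type*} {G : SimpleGraph V}

theorem not_dir_of_dir (O : GraphOrientation G) {a b : V} (h : O.dir a b) : ¬ O.dir b a :=
  (O.dir_iff_not a b (O.adj_of_dir a b h)).1 h

theorem isCycle_cycleBypass (O : GraphOrientation G) [DecidableEq V] {u : V} {w : G.Walk u u}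
    (hw : ¬ w.Nil) (hO : ∀ d ∈ w.darts, O.dir d.fst d.snd) : w.cycleBypass.IsCycle := by
  cases w with
  | nil => exact absurd Walk.Nil.nil hw
  | cons h p =>
    have hp : p.bypass.IsPath := p.bypass_isPath
    refine (Walk.cons_isCycle_iff _ h).2 ⟨hp, fun he => ?_⟩
    obtain ⟨d, hd, hde⟩ := List.mem_map.1 he
    -- Traversed forwards, the closing edge would revisit `v` on the path; backwards, it would
    -- run against the orientation.
    rcases Sym2.eq_iff.1 hde with ⟨-, hdv⟩ | ⟨hdv, hdu⟩
    · have hsnd : d.snd ∈ p.bypass.support.tail :=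
        p.bypass.map_snd_darts ▸ List.mem_map_of_mem hd
      have hnodup := hp.support_nodup
      rw [← p.bypass.cons_tail_support, List.nodup_cons] at hnodup
      exact hnodup.1 (hdv ▸ hsnd)
    · have hvu := hO d (List.mem_cons_of_mem _ (p.darts_bypass_subset_darts hd))
      rw [hdv, hdu] at hvu
      exact O.not_dir_of_dir (hO _ List.mem_cons_self) hvu

theorem exists_isDirCycle_sUnion_eq [Finite V] (O : GraphOrientation G) {A : Set (V × V)}
    (hO : ∀ p ∈ A, O.dir p.1 p.2) (hA : A.IsBalanced) :
    ∃ 𝒞 : Set (Set (Sym2 V)), (∀ D ∈ 𝒞, O.IsDirCycle D) ∧ ⋃₀ 𝒞 = Sym2.mk.uncurry '' A := by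
  classical
  induction hn : A.ncard using Nat.strong_induction_on generalizing A with
  | _ n ih =>
  rcases A.eq_empty_or_nonempty with rfl | hne
  · exact ⟨∅, by simp, by simp⟩
  obtain ⟨u, w, hw, hwA⟩ :=
    Walk.exists_closedWalk_of_isBalanced (fun p hp => O.adj_of_dir _ _ (hO p hp)) hA hne
  set c := w.cycleBypass
  have hcA : c.arcSet ⊆ A := by
    rintro _ ⟨d, hd, rfl⟩
    exact hwA d (w.darts_cycleBypass_sublist_darts.subset hd)
  have hc : c.IsCycle := O.isCycle_cycleBypass hw fun d hd => hO _ (hwA d hd)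
  have hlt : (A \ c.arcSet).ncard < n := by
    obtain ⟨d, hd⟩ := List.exists_mem_of_ne_nil _ (Walk.darts_eq_nil.not.2 hc.not_nil)
    have hpos : 0 < c.arcSet.ncard := (Set.ncard_pos (Set.toFinite _)).2 ⟨d.toProd, d, hd, rfl⟩
    have hle := Set.ncard_le_ncard hcA
    rw [Set.ncard_sdiff hcA]
    omega
  obtain ⟨𝒞, h𝒞, hunion⟩ := ih _ hlt (fun p hp => hO p hp.1)
    (hA.sdiff hc.isTrail.isBalanced_arcSet hcA) rfl
  refine ⟨insert c.edgeSet 𝒞, ?_, ?_⟩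
  · rintro D (rfl | hD)
    · exact ⟨u, c, hc, fun d hd => hO _ (hcA ⟨d, hd, rfl⟩), rfl⟩
    · exact h𝒞 D hD
  · rw [Set.sUnion_insert, hunion, ← c.image_uncurry_mk_arcSet, ← Set.image_union,
      Set.union_sdiff_cancel hcA]

variable {O O' : GraphOrientation G}

theorem disjoint_preimage_swap (O : GraphOrientation G) {A : Set (V × V)}
    (hO : ∀ p ∈ A, O.dir p.1 p.2) : Disjoint A (Prod.swap ⁻¹' A) :=
  Set.disjoint_left.2 fun p hp hps => O.not_dir_of_dir (hO p hp) (hO _ hps)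

theorem dir_of_mem_darts_reverse {u v : V} {w : G.Walk u v}
    (hO : ∀ d ∈ w.darts, O.dir d.fst d.snd) (hflip : O.IsFlipOn O' w.edgeSet)
    {d : G.Dart} (hd : d ∈ w.reverse.darts) : O'.dir d.fst d.snd := by
  rw [Walk.darts_reverse, List.mem_reverse, List.mem_map] at hd
  obtain ⟨d', hd', rfl⟩ := hd
  have hedge : d'.symm.edge ∈ w.edgeSet := d'.edge_symm ▸ List.mem_map_of_mem hd'
  exact (hflip.1 _ _ hedge).2 (hO d' hd')

theorem IsDirCycle.isDirCycle_of_isFlipOn {C : Set (Sym2 V)} (hC : O.IsDirCycle C)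
    (hflip : O.IsFlipOn O' C) : O'.IsDirCycle C := by
  obtain ⟨u, w, hw, hwO, rfl⟩ := hC
  exact ⟨u, w.reverse, hw.reverse, fun d hd => dir_of_mem_darts_reverse hwO hflip hd,
    (w.edgeSet_reverse).symm⟩

theorem IsDirCycle.exists_sUnion_eq_symmDiff [Finite V] {C C' : Set (Sym2 V)}
    (hC : O.IsDirCycle C) (hC' : O.IsDirCycle C') (hflip : O.IsFlipOn O' C') :
    ∃ 𝒞 : Set (Set (Sym2 V)), (∀ D ∈ 𝒞, O'.IsDirCycle D) ∧ ⋃₀ 𝒞 = symmDiff C C' := by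
  obtain ⟨u, w, hw, hwO, rfl⟩ := hC
  obtain ⟨u', w', hw', hw'O, rfl⟩ := hC'
  set P := w.arcSet
  set Q := w'.reverse.arcSet
  have hPO : ∀ p ∈ P, O.dir p.1 p.2 := by
    rintro _ ⟨d, hd, rfl⟩
    exact hwO d hd
  have hQO' : ∀ p ∈ Q, O'.dir p.1 p.2 := by
    rintro _ ⟨d, hd, rfl⟩
    exact dir_of_mem_darts_reverse hw'O hflip hd
  have hQ : Sym2.mk.uncurry '' Q = w'.edgeSet := by
    rw [Walk.image_uncurry_mk_arcSet, Walk.edgeSet_reverse]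
  have hPQ : Disjoint P Q := Set.disjoint_left.2 fun p hpP hpQ => by
    have hpC' : s(p.1, p.2) ∈ w'.edgeSet := hQ ▸ Set.mem_image_of_mem _ hpQ
    exact O.not_dir_of_dir (hPO p hpP) ((hflip.1 _ _ hpC').1 (hQO' p hpQ))
  have hdir : ∀ p ∈ (P ∪ Q) \ Prod.swap ⁻¹' (P ∪ Q), O'.dir p.1 p.2 := by
    rintro p ⟨hp | hp, hps⟩
    · have hpC' : s(p.1, p.2) ∉ w'.edgeSet := by
        rw [← hQ, Sym2.mk_mem_image_uncurry_mk]
        rintro (h | h)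
        exacts [hPQ.notMem_of_mem_left hp h, hps (Or.inr h)]
      exact (hflip.2 _ _ hpC').2 (hPO p hp)
    · exact hQO' p hp
  have hbal := hw.isTrail.isBalanced_arcSet.union hw'.reverse.isTrail.isBalanced_arcSet hPQ
  obtain ⟨𝒞, h𝒞, hunion⟩ := O'.exists_isDirCycle_sUnion_eq hdir hbal.sdiff_preimage_swap
  refine ⟨𝒞, h𝒞, ?_⟩
  rw [hunion, Sym2.image_uncurry_mk_union_sdiff_preimage_swap (O.disjoint_preimage_swap hPO)
    (O'.disjoint_preimage_swap hQO') hPQ, Walk.image_uncurry_mk_arcSet, hQ]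
  rfl

end GraphOrientation

theorem statement8 {V : Type*} [Fintype V] (G : SimpleGraph V)
    (O O' : GraphOrientation G) (C C' : Set (Sym2 V))
    (hC : O.IsDirCycle C) (hC' : O.IsDirCycle C') (hflip : O.IsFlipOn O' C') :
    (∃ 𝒞 : Set (Set (Sym2 V)), (∀ D ∈ 𝒞, O'.IsDirCycle D) ∧ ⋃₀ 𝒞 = symmDiff C C') ∧
      ∀ e ∈ C, ∃ D : Set (Sym2 V), O'.IsDirCycle D ∧ e ∈ D ∧ D ⊆ C ∪ C' := by
  obtain ⟨𝒞, h𝒞, hunion⟩ := hC.exists_sUnion_eq_symmDiff hC' hflip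
  refine ⟨⟨𝒞, h𝒞, hunion⟩, fun e he => ?_⟩
  by_cases heC' : e ∈ C'
  · exact ⟨C', hC'.isDirCycle_of_isFlipOn hflip, heC', Set.subset_union_right⟩
  · obtain ⟨D, hD, heD⟩ : e ∈ ⋃₀ 𝒞 := hunion ▸ Or.inl ⟨he, heC'⟩
    exact ⟨D, h𝒞 D hD, heD,
      (Set.subset_sUnion_of_mem hD).trans (hunion ▸ Set.symmDiff_subset_union)⟩
end

section
/- Let G = (V,E) be a finite simple graph, let O be an orientation of G, and let O' be the orientation obtained from O by reversing the direction of every edge of an O-directed cycle, or of every edge of an O-directed cocycle. Then for every edge e of G, e lies in some O-directed cycle if and only if e lies in some O'-directed cycle (equivalently, the cyclic part and the acyclic part of the orientation are unchanged by cycle-flips and cocycle-flips). -/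
/-!
An edge `ab` with `a → b` lies on a directed cycle iff `b` reaches `a`, and then its endpoints are
mutually reachable. So it suffices that a flip preserves reachability between mutually reachable
vertices, and for that it suffices to realise each arc `x → y` with `y ⇝ x` by a directed path of
the new orientation. After a cycle-flip every arc is realised, unchanged or along the reversed
cycle. A directed cut into `U` makes `U` closed under reachability, so no arc on a directed cycle
crosses it and a cocycle-flip leaves all such arcs alone. Flipping back is a flip of the same kind,
which gives the converse.
-/

namespace SimpleGraph

variable {V : Type*} {G : SimpleGraph V}

lemma Walk.IsPath.fst_ne_of_mem_darts {u v : V} {p : G.Walk u v} (hp : p.IsPath)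
    {d : G.Dart} (hd : d ∈ p.darts) : d.fst ≠ v := by
  induction p with
  | nil => simp at hd
  | cons h q ih =>
    rw [Walk.cons_isPath_iff] at hp
    rw [Walk.darts_cons, List.mem_cons] at hd
    rcases hd with rfl | hd
    · rintro rfl
      exact hp.2 q.end_mem_support
    · exact ih hp.1 hd

lemma mk_mem_cutSet_iff {U : Set V} {a b : V} :
    s(a, b) ∈ G.cutSet U ↔ G.Adj a b ∧ (a ∈ U ↔ b ∉ U) := by
  constructor
  · rintro ⟨x, y, hxy, hadj, hx, hy⟩
    rcases Sym2.eq_iff.mp hxy with ⟨rfl, rfl⟩ | ⟨rfl, rfl⟩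
    · exact ⟨hadj, by tauto⟩
    · exact ⟨hadj.symm, by tauto⟩
  · rintro ⟨hadj, hab⟩
    by_cases ha : a ∈ U
    · exact ⟨a, b, rfl, hadj, ha, hab.mp ha⟩
    · exact ⟨b, a, Sym2.eq_swap, hadj.symm, by tauto, ha⟩

lemma cutSet_compl (U : Set V) : G.cutSet Uᶜ = G.cutSet U := by
  ext e
  induction e using Sym2.ind with
  | _ a b =>
    simp only [mk_mem_cutSet_iff, Set.mem_compl_iff]
    tauto

end SimpleGraph

namespace GraphOrientation

open SimpleGraph

variable {V : Type*} {G : SimpleGraph V} {O O' : GraphOrientation G}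

def IsDirWalk (O : GraphOrientation G) {u v : V} (w : G.Walk u v) : Prop :=
  ∀ d ∈ w.darts, O.dir d.fst d.snd

lemma isDirWalk_cons {u v w : V} (h : G.Adj u v) (p : G.Walk v w) :
    O.IsDirWalk (.cons h p) ↔ O.dir u v ∧ O.IsDirWalk p := by
  simp [IsDirWalk]

lemma IsDirWalk.reaches {u v : V} {w : G.Walk u v} (hw : O.IsDirWalk w) : O.Reaches u v := by
  induction w with
  | nil => exact .refl
  | cons h p ih =>
    rw [isDirWalk_cons] at hw
    exact .head hw.1 (ih hw.2)

lemma reaches_iff_exists_isDirWalk {u v : V} :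
    O.Reaches u v ↔ ∃ w : G.Walk u v, O.IsDirWalk w := by
  refine ⟨fun h => ?_, fun ⟨w, hw⟩ => hw.reaches⟩
  induction h using Relation.ReflTransGen.head_induction_on with
  | refl => exact ⟨.nil, by simp [IsDirWalk]⟩
  | head hxy _ ih =>
    obtain ⟨w, hw⟩ := ih
    exact ⟨.cons (O.adj_of_dir _ _ hxy) w, (isDirWalk_cons _ _).mpr ⟨hxy, hw⟩⟩

lemma IsDirWalk.reaches_of_mem_support {u v x : V} {w : G.Walk u v} (hw : O.IsDirWalk w)
    (hx : x ∈ w.support) : O.Reaches u x ∧ O.Reaches x v := by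
  classical
  exact ⟨IsDirWalk.reaches fun d hd => hw d (w.darts_takeUntil_subset_darts hx hd),
    IsDirWalk.reaches fun d hd => hw d (w.darts_dropUntil_subset_darts hx hd)⟩

lemma IsDirWalk.reaches_of_mem_support_of_closed {v x y : V} {w : G.Walk v v}
    (hw : O.IsDirWalk w) (hx : x ∈ w.support) (hy : y ∈ w.support) : O.Reaches x y :=
  (hw.reaches_of_mem_support hx).2.trans (hw.reaches_of_mem_support hy).1

lemma IsFlipOn.symm {A : Set (Sym2 V)} (hflip : O.IsFlipOn O' A) : O'.IsFlipOn O A :=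
  ⟨fun u v huv => (hflip.1 v u (Sym2.eq_swap ▸ huv)).symm,
    fun u v huv => (hflip.2 u v huv).symm⟩

lemma IsDirWalk.reverse_of_flip {u v : V} {w : G.Walk u v} (hw : O.IsDirWalk w)
    {A : Set (Sym2 V)} (hwA : ∀ e ∈ w.edges, e ∈ A) (hflip : O.IsFlipOn O' A) :
    O'.IsDirWalk w.reverse := by
  intro d hd
  rw [Walk.darts_reverse, List.mem_reverse, List.mem_map] at hd
  obtain ⟨d, hd, rfl⟩ := hd
  have hmem : s(d.snd, d.fst) ∈ A := Sym2.eq_swap ▸ hwA _ (List.mem_map_of_mem hd)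
  exact (hflip.1 _ _ hmem).mpr (hw d hd)

lemma IsDirCycle.flip {A : Set (Sym2 V)} (hA : O.IsDirCycle A) (hflip : O.IsFlipOn O' A) :
    O'.IsDirCycle A := by
  obtain ⟨v, w, hcyc, hw, rfl⟩ := hA
  refine ⟨v, w.reverse, hcyc.reverse,
    IsDirWalk.reverse_of_flip hw (fun _ he => he) hflip, ?_⟩
  simp [Walk.edges_reverse]

lemma IsDirCocycle.flip {A : Set (Sym2 V)} (hA : O.IsDirCocycle A) (hflip : O.IsFlipOn O' A) :
    O'.IsDirCocycle A := by
  obtain ⟨hcoc, U, rfl, hin⟩ := hA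
  refine ⟨hcoc, Uᶜ, (cutSet_compl U).symm, fun a b hab hmem => ?_⟩
  have hU := (mk_mem_cutSet_iff.mp hmem).2
  have haU := hin b a ((hflip.1 a b hmem).mp hab) (Sym2.eq_swap ▸ hmem)
  tauto

def IsCyclicEdge (O : GraphOrientation G) (e : Sym2 V) : Prop :=
  ∃ a b, e = s(a, b) ∧ O.dir a b ∧ O.Reaches b a

lemma isCyclicEdge_iff_exists_isDirCycle {e : Sym2 V} :
    O.IsCyclicEdge e ↔ ∃ C : Set (Sym2 V), O.IsDirCycle C ∧ e ∈ C := by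
  classical
  constructor
  · rintro ⟨a, b, rfl, hab, hba⟩
    obtain ⟨w, hw⟩ := reaches_iff_exists_isDirWalk.mp hba
    have hadj := O.adj_of_dir _ _ hab
    have hpath : O.IsDirWalk w.bypass := fun d hd => hw d (w.darts_bypass_subset_darts hd)
    -- a dart of the path `b ⇝ a` on the edge `ab` can neither leave `a` nor point against `a → b`
    have hnot : s(a, b) ∉ w.bypass.edges := by
      intro he
      obtain ⟨d, hd, hde⟩ := List.mem_map.mp he
      rcases (dart_edge_eq_mk'_iff' (d := d)).mp hde with ⟨h1, -⟩ | ⟨h1, h2⟩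
      · exact w.bypass_isPath.fst_ne_of_mem_darts hd h1
      · exact (O.dir_iff_not a b hadj).mp hab (h1 ▸ h2 ▸ hpath d hd)
    refine ⟨_, ⟨a, .cons hadj w.bypass, ?_, (isDirWalk_cons _ _).mpr ⟨hab, hpath⟩, rfl⟩, ?_⟩
    · exact (Walk.cons_isCycle_iff _ _).mpr ⟨w.bypass_isPath, hnot⟩
    · simp
  · rintro ⟨C, ⟨v, w, -, hw, rfl⟩, he⟩
    obtain ⟨d, hd, rfl⟩ := List.mem_map.mp he
    exact ⟨d.fst, d.snd, rfl, hw d hd, IsDirWalk.reaches_of_mem_support_of_closed hw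
      (w.dart_snd_mem_support_of_mem_darts hd) (w.dart_fst_mem_support_of_mem_darts hd)⟩

lemma reaches_of_reaches_of_cyclic_arcs
    (h : ∀ x y, O.dir x y → O.Reaches y x → O'.Reaches x y) {u v : V}
    (huv : O.Reaches u v) (hvu : O.Reaches v u) : O'.Reaches u v := by
  induction huv with
  | refl => exact .refl
  | tail huz hzy ih =>
    exact (ih (.head hzy hvu)).trans (h _ _ hzy (hvu.trans huz))

lemma reaches_of_dir_of_flip_closed {v x y : V} {w : G.Walk v v} (hw : O.IsDirWalk w)
    (hflip : O.IsFlipOn O' {e | e ∈ w.edges}) (hxy : O.dir x y) : O'.Reaches x y := by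
  by_cases hmem : s(x, y) ∈ w.edges
  · have hw' := hw.reverse_of_flip (fun _ he => he) hflip
    exact hw'.reaches_of_mem_support_of_closed
      (by simpa using w.fst_mem_support_of_mem_edges hmem)
      (by simpa using w.snd_mem_support_of_mem_edges hmem)
  · exact .single ((hflip.2 x y hmem).mpr hxy)

lemma mem_of_reaches_of_dirCut {U : Set V} (hin : ∀ a b, O.dir a b → s(a, b) ∈ G.cutSet U → b ∈ U)
    {x y : V} (hx : x ∈ U) (hxy : O.Reaches x y) : y ∈ U := by
  induction hxy with
  | refl => exact hx
  | tail _ hzy hz =>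
    by_contra hy
    exact hy (hin _ _ hzy (mk_mem_cutSet_iff.mpr ⟨O.adj_of_dir _ _ hzy, by tauto⟩))

lemma dir_of_flip_dirCut {U : Set V} (hin : ∀ a b, O.dir a b → s(a, b) ∈ G.cutSet U → b ∈ U)
    (hflip : O.IsFlipOn O' (G.cutSet U)) {x y : V} (hxy : O.dir x y) (hyx : O.Reaches y x) :
    O'.dir x y := by
  refine (hflip.2 x y fun hmem => ?_).mpr hxy
  have hy := hin x y hxy hmem
  exact (mk_mem_cutSet_iff.mp hmem).2.mp (mem_of_reaches_of_dirCut hin hy hyx) hy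

lemma reaches_of_flip {A : Set (Sym2 V)} (hA : O.IsDirCycle A ∨ O.IsDirCocycle A)
    (hflip : O.IsFlipOn O' A) {u v : V} (huv : O.Reaches u v) (hvu : O.Reaches v u) :
    O'.Reaches u v := by
  refine reaches_of_reaches_of_cyclic_arcs (fun x y hxy hyx => ?_) huv hvu
  rcases hA with ⟨_, w, -, hw, rfl⟩ | ⟨-, U, rfl, hin⟩
  · exact reaches_of_dir_of_flip_closed hw hflip hxy
  · exact .single (dir_of_flip_dirCut hin hflip hxy hyx)

lemma IsCyclicEdge.of_flip {A : Set (Sym2 V)} (hA : O.IsDirCycle A ∨ O.IsDirCocycle A)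
    (hflip : O.IsFlipOn O' A) {e : Sym2 V} (he : O.IsCyclicEdge e) : O'.IsCyclicEdge e := by
  obtain ⟨a, b, rfl, hab, hba⟩ := he
  have hab' := reaches_of_flip hA hflip (.single hab) hba
  have hba' := reaches_of_flip hA hflip hba (.single hab)
  by_cases h : O'.dir a b
  · exact ⟨a, b, rfl, h, hba'⟩
  · have hadj := O.adj_of_dir _ _ hab
    exact ⟨b, a, Sym2.eq_swap, (O'.dir_iff_not b a hadj.symm).mpr h, hab'⟩

end GraphOrientation

theorem statement11_general {V : Type*} (G : SimpleGraph V)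
    (O O' : GraphOrientation G) (A : Set (Sym2 V))
    (hA : O.IsDirCycle A ∨ O.IsDirCocycle A) (hflip : O.IsFlipOn O' A) :
    ∀ e : Sym2 V, (∃ C : Set (Sym2 V), O.IsDirCycle C ∧ e ∈ C) ↔
      (∃ C : Set (Sym2 V), O'.IsDirCycle C ∧ e ∈ C) := by
  intro e
  have hA' : O'.IsDirCycle A ∨ O'.IsDirCocycle A := hA.imp (·.flip hflip) (·.flip hflip)
  simp only [← GraphOrientation.isCyclicEdge_iff_exists_isDirCycle]
  exact ⟨.of_flip hA hflip, .of_flip hA' hflip.symm⟩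

theorem statement11 {V : Type*} [Fintype V] (G : SimpleGraph V)
    (O O' : GraphOrientation G) (A : Set (Sym2 V))
    (hA : O.IsDirCycle A ∨ O.IsDirCocycle A) (hflip : O.IsFlipOn O' A) :
    ∀ e : Sym2 V, (∃ C : Set (Sym2 V), O.IsDirCycle C ∧ e ∈ C) ↔
      (∃ C : Set (Sym2 V), O'.IsDirCycle C ∧ e ∈ C) :=
  statement11_general G O O' A hA hflip
end

section
/- Let G = (V,E) be a finite connected simple graph and let v0 be a fixed vertex. The number of v0-connected orientations of G equals the number of connected spanning subgraphs of G, i.e. the number of subsets S ⊆ E such that the graph (V,S) is connected. (Both are counted by the Tutte polynomial evaluation T_G(1,2).) -/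
/-!
Besides the orientation (resp. the edge set), allow an arbitrary relation `r` whose arcs may be
used for free, and count the orientations `O` of `G` such that every vertex is reachable from `v0`
along `O ∪ r`, resp. the edge sets `S ⊆ E(G)` such that every vertex is reachable along `S ∪ r`.
Both counts agree on the edgeless graph and obey the same recursion for an edge `e = uv`:
the count for `(G, r)` is the count for `(G - e, r)` plus the count for `(G - e, r ∪ {u ↔ v})`.
For edge sets this is the case split `e ∉ S`, `e ∈ S`. For an orientation `P` of `G - e` and
`R = P ∪ r`, both extensions of `P` work iff `R` alone reaches everything, and at least one
works iff `R ∪ {u ↔ v}` does (if `R` reaches `u`, orient `e` as `u → v`). Taking `r = ∅` gives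
the theorem.
-/

namespace Relation

def ReachesAll {V : Type*} (R : V → V → Prop) (v0 : V) : Prop := ∀ w, ReflTransGen R v0 w

def arc {V : Type*} (x y : V) : V → V → Prop := fun a b => a = x ∧ b = y

namespace ReachesAll

variable {V : Type*} {R S : V → V → Prop} {v0 : V}

theorem mono (hRS : R ≤ S) (h : ReachesAll R v0) : ReachesAll S v0 :=
  fun w => ReflTransGen.mono hRS _ _ (h w)

theorem of_sup (h : ReachesAll (R ⊔ S) v0)
    (hS : ∀ a b, ReflTransGen R v0 a → S a b → ReflTransGen R v0 b) : ReachesAll R v0 := by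
  intro w
  induction h w with
  | refl => exact .refl
  | tail _ hab ih => exact Or.elim hab ih.tail (hS _ _ ih)

theorem sup_arc_of_sup_arcs {x y : V} (h : ReachesAll (R ⊔ (arc x y ⊔ arc y x)) v0)
    (hx : ReflTransGen R v0 x) : ReachesAll (R ⊔ arc x y) v0 := by
  rw [← sup_assoc] at h
  refine h.of_sup ?_
  rintro a b - ⟨rfl, rfl⟩
  exact ReflTransGen.mono le_sup_left _ _ hx

end ReachesAll

section Arcs

variable {V : Type*} {R : V → V → Prop} {v0 : V}

-- The `R`-reachable set is closed under `x → y` if it contains `y`, and under `y → x` otherwise.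
theorem reachesAll_sup_arc_and_sup_arc_iff (x y : V) :
    ReachesAll (R ⊔ arc x y) v0 ∧ ReachesAll (R ⊔ arc y x) v0 ↔ ReachesAll R v0 := by
  refine ⟨fun ⟨hxy, hyx⟩ => ?_, fun h => ⟨h.mono le_sup_left, h.mono le_sup_left⟩⟩
  by_cases hy : ReflTransGen R v0 y
  · exact hxy.of_sup fun a b _ ⟨_, hb⟩ => hb ▸ hy
  · exact hyx.of_sup fun a b ha ⟨ha', _⟩ => absurd (ha' ▸ ha) hy

theorem reachesAll_sup_arc_or_sup_arc_iff (x y : V) :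
    ReachesAll (R ⊔ arc x y) v0 ∨ ReachesAll (R ⊔ arc y x) v0 ↔
      ReachesAll (R ⊔ (arc x y ⊔ arc y x)) v0 := by
  refine ⟨fun h => h.elim (ReachesAll.mono ?_) (ReachesAll.mono ?_), fun h => ?_⟩
  · exact sup_le_sup_left le_sup_left _
  · exact sup_le_sup_left le_sup_right _
  by_cases hx : ReflTransGen R v0 x
  · exact .inl (h.sup_arc_of_sup_arcs hx)
  by_cases hy : ReflTransGen R v0 y
  · exact .inr ((sup_comm (arc x y) _ ▸ h).sup_arc_of_sup_arcs hy)
  refine absurd (h.of_sup (fun a b ha hab => ?_) x) hx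
  exact hab.elim (fun ⟨ha', _⟩ => absurd (ha' ▸ ha) hx) (fun ⟨ha', _⟩ => absurd (ha' ▸ ha) hy)

end Arcs

end Relation

open Relation

theorem Set.ncard_setOf_eq_add_of_equiv_prod_bool {X Y : Type*} [Finite Y] (e : X ≃ Y × Bool)
    (p : X → Prop) :
    {x | p x}.ncard = {y | p (e.symm (y, true))}.ncard + {y | p (e.symm (y, false))}.ncard := by
  simp only [← Nat.card_coe_set_eq, Set.coe_ofPred]
  let e' : X ≃ Y ⊕ Y := e.trans ((Equiv.prodComm _ _).trans (Equiv.boolProdEquivSum Y))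
  rw [Nat.card_congr (e'.subtypeEquiv (q := fun s => p (e'.symm s)) (by simp)),
    Nat.card_congr Equiv.subtypeSum, Nat.card_sum, add_comm]
  rfl

theorem Set.ncard_setOf_subset_eq_add_of_mem {α : Type*} {E : Set α} {e : α} (hE : E.Finite)
    (he : e ∈ E) (p : Set α → Prop) :
    {S | S ⊆ E ∧ p S}.ncard =
      {S | S ⊆ E \ {e} ∧ p S}.ncard + {S | S ⊆ E \ {e} ∧ p (insert e S)}.ncard := by
  have hfin : {S | S ⊆ E \ {e}}.Finite := hE.sdiff.finite_subsets
  have hsplit : {S | S ⊆ E ∧ p S} =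
      {S | S ⊆ E \ {e} ∧ p S} ∪ insert e '' {S | S ⊆ E \ {e} ∧ p (insert e S)} := by
    ext S
    constructor
    · rintro ⟨hSE, hS⟩
      by_cases heS : e ∈ S
      · refine .inr ⟨S \ {e}, ⟨Set.sdiff_subset_sdiff_left hSE, ?_⟩, ?_⟩ <;>
          simp [Set.insert_eq_of_mem heS, hS]
      · exact .inl ⟨Set.subset_sdiff_singleton hSE heS, hS⟩
    · rintro (⟨hS, hp⟩ | ⟨T, ⟨hT, hp⟩, rfl⟩)
      · exact ⟨hS.trans Set.sdiff_subset, hp⟩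
      · exact ⟨Set.insert_subset he (hT.trans Set.sdiff_subset), hp⟩
  have hinj : Set.InjOn (insert e) {S | S ⊆ E \ {e} ∧ p (insert e S)} := by
    rintro S ⟨hS, -⟩ T ⟨hT, -⟩ hST
    rw [← Set.insert_sdiff_self_of_notMem fun h => (hS h).2 rfl,
      ← Set.insert_sdiff_self_of_notMem fun h => (hT h).2 rfl, hST]
  have hdisj : Disjoint {S | S ⊆ E \ {e} ∧ p S}
      (insert e '' {S | S ⊆ E \ {e} ∧ p (insert e S)}) := by
    refine Set.disjoint_left.mpr ?_
    rintro _ ⟨hS, -⟩ ⟨T, -, rfl⟩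
    exact (hS (Set.mem_insert e T)).2 rfl
  rw [hsplit, Set.ncard_union_eq hdisj (hfin.subset fun S hS => hS.1)
    ((hfin.subset fun S hS => hS.1).image _), hinj.ncard_image]

namespace GraphOrientation

variable {V : Type*} {G : SimpleGraph V}

theorem ext {O O' : GraphOrientation G} (h : O.dir = O'.dir) : O = O' := by
  cases O; cases O'; cases h; rfl

instance [Finite V] : Finite (GraphOrientation G) :=
  Finite.of_injective dir fun _ _ => ext

instance : Unique (GraphOrientation (⊥ : SimpleGraph V)) where
  default := ⟨⊥, fun _ _ h => h.elim, fun _ _ h => h.elim⟩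
  uniq O := ext (eq_bot_iff.mpr fun a b h => (O.adj_of_dir a b h).elim)

def restrict {H : SimpleGraph V} (O : GraphOrientation G) (hHG : H ≤ G) :
    GraphOrientation H where
  dir a b := O.dir a b ∧ H.Adj a b
  adj_of_dir _ _ h := h.2
  dir_iff_not a b hab := by simp [hab, hab.symm, O.dir_iff_not a b (hHG hab)]

theorem dir_ne_of_deleteEdges {e : Sym2 V} (P : GraphOrientation (G.deleteEdges {e}))
    {a b : V} (h : P.dir a b) : s(a, b) ≠ e := by
  simpa using (SimpleGraph.deleteEdges_adj.mp (P.adj_of_dir a b h)).2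

def extend {e : Sym2 V} (P : GraphOrientation (G.deleteEdges {e})) {x y : V} (hxy : G.Adj x y)
    (he : s(x, y) = e) : GraphOrientation G where
  dir := P.dir ⊔ arc x y
  adj_of_dir a b := by
    rintro (h | ⟨rfl, rfl⟩)
    exacts [(P.adj_of_dir a b h).1, hxy]
  dir_iff_not a b hab := by
    by_cases hab_e : s(a, b) = e
    · have hPab : ¬ P.dir a b := fun h => P.dir_ne_of_deleteEdges h hab_e
      have hPba : ¬ P.dir b a := fun h => P.dir_ne_of_deleteEdges h (Sym2.eq_swap.trans hab_e)
      rcases Sym2.eq_iff.mp (hab_e.trans he.symm) with ⟨rfl, rfl⟩ | ⟨rfl, rfl⟩ <;>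
        simp [arc, hPab, hPba, hxy.ne, hxy.ne.symm]
    · have hab' : (G.deleteEdges {e}).Adj a b := by simpa [hab] using hab_e
      have hxy_ab : ¬ arc x y a b := by rintro ⟨rfl, rfl⟩; exact hab_e he
      have hxy_ba : ¬ arc x y b a := by rintro ⟨rfl, rfl⟩; exact hab_e (Sym2.eq_swap.trans he)
      simpa [hxy_ab, hxy_ba] using P.dir_iff_not a b hab'

theorem extend_restrict {e : Sym2 V} {x y : V} (hxy : G.Adj x y) (he : s(x, y) = e)
    (O : GraphOrientation G) (h : O.dir x y) :
    (O.restrict (G.deleteEdges_le {e})).extend hxy he = O := by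
  subst he
  refine ext (funext₂ fun a b => propext ⟨?_, fun hab => ?_⟩)
  · rintro (⟨hab, -⟩ | ⟨rfl, rfl⟩)
    exacts [hab, h]
  by_cases hab_e : s(a, b) = s(x, y)
  · rcases Sym2.eq_iff.mp hab_e with ⟨rfl, rfl⟩ | ⟨rfl, rfl⟩
    · exact .inr ⟨rfl, rfl⟩
    · exact absurd h ((O.dir_iff_not _ _ (O.adj_of_dir _ _ hab)).mp hab)
  · exact .inl ⟨hab, by simpa [O.adj_of_dir a b hab] using hab_e⟩

theorem restrict_extend {e : Sym2 V} (P : GraphOrientation (G.deleteEdges {e})) {x y : V}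
    (hxy : G.Adj x y) (he : s(x, y) = e) :
    (P.extend hxy he).restrict (G.deleteEdges_le {e}) = P := by
  refine ext (funext₂ fun a b => propext ⟨?_, fun hab => ⟨.inl hab, P.adj_of_dir a b hab⟩⟩)
  rintro ⟨hab | ⟨rfl, rfl⟩, hadj⟩
  · exact hab
  · exact absurd he (by simpa using (SimpleGraph.deleteEdges_adj.mp hadj).2)

open scoped Classical in
noncomputable def equivDeleteEdgesProdBool {u v : V} (huv : G.Adj u v) :
    GraphOrientation G ≃ GraphOrientation (G.deleteEdges {s(u, v)}) × Bool where
  toFun O := (O.restrict (G.deleteEdges_le _), decide (O.dir u v))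
  invFun P := bif P.2 then P.1.extend huv rfl else P.1.extend huv.symm Sym2.eq_swap
  left_inv O := by
    by_cases h : O.dir u v
    · simpa [h] using extend_restrict huv rfl O h
    · have h' : O.dir v u := (O.dir_iff_not v u huv.symm).mpr h
      simpa [h] using extend_restrict huv.symm Sym2.eq_swap O h'
  right_inv := by
    rintro ⟨P, _ | _⟩
    · refine Prod.ext (restrict_extend P huv.symm Sym2.eq_swap) ?_
      have : ¬ P.dir u v := fun h => P.dir_ne_of_deleteEdges h rfl
      simp [extend, arc, this, huv.ne]
    · exact Prod.ext (restrict_extend P huv rfl) (by simp [extend, arc])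

theorem ncard_reachesAll_eq_add [Finite V] {u v : V} (huv : G.Adj u v) (r : V → V → Prop) (v0 : V) :
    {O : GraphOrientation G | ReachesAll (O.dir ⊔ r) v0}.ncard =
      {P : GraphOrientation (G.deleteEdges {s(u, v)}) | ReachesAll (P.dir ⊔ r) v0}.ncard +
      {P : GraphOrientation (G.deleteEdges {s(u, v)}) |
        ReachesAll (P.dir ⊔ (r ⊔ (arc u v ⊔ arc v u))) v0}.ncard := by
  rw [Set.ncard_setOf_eq_add_of_equiv_prod_bool (equivDeleteEdgesProdBool huv),
    ← Set.ncard_union_add_ncard_inter, add_comm]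
  congr 2 <;> ext P <;> simp only [Set.mem_union, Set.mem_inter_iff, Set.mem_ofPred_eq]
  · change ReachesAll (P.dir ⊔ arc u v ⊔ r) v0 ∧ ReachesAll (P.dir ⊔ arc v u ⊔ r) v0 ↔ _
    rw [sup_right_comm, sup_right_comm _ (arc v u)]
    exact reachesAll_sup_arc_and_sup_arc_iff u v
  · change ReachesAll (P.dir ⊔ arc u v ⊔ r) v0 ∨ ReachesAll (P.dir ⊔ arc v u ⊔ r) v0 ↔ _
    rw [sup_right_comm, sup_right_comm _ (arc v u), reachesAll_sup_arc_or_sup_arc_iff, sup_assoc]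

end GraphOrientation

section

variable {V : Type*}

theorem SimpleGraph.ncard_subsets_reachesAll_eq_add [Finite V] {G : SimpleGraph V} {u v : V}
    (huv : G.Adj u v) (r : V → V → Prop) (v0 : V) :
    {S | S ⊆ G.edgeSet ∧ ReachesAll (Sym2.ToRel S ⊔ r) v0}.ncard =
      {S | S ⊆ (G.deleteEdges {s(u, v)}).edgeSet ∧ ReachesAll (Sym2.ToRel S ⊔ r) v0}.ncard +
      {S | S ⊆ (G.deleteEdges {s(u, v)}).edgeSet ∧
        ReachesAll (Sym2.ToRel S ⊔ (r ⊔ (arc u v ⊔ arc v u))) v0}.ncard := by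
  have hrel : ∀ S, Sym2.ToRel (insert s(u, v) S) ⊔ r =
      Sym2.ToRel S ⊔ (r ⊔ (arc u v ⊔ arc v u)) := by
    intro S
    ext a b
    simp [Sym2.toRel_prop, arc]
    tauto
  simp only [SimpleGraph.edgeSet_deleteEdges, ← hrel]
  exact Set.ncard_setOf_subset_eq_add_of_mem G.edgeSet.toFinite huv _

theorem ncard_orientations_reachesAll_eq_ncard_subsets_bot (r : V → V → Prop) (v0 : V) :
    {O : GraphOrientation (⊥ : SimpleGraph V) | ReachesAll (O.dir ⊔ r) v0}.ncard =
      {S | S ⊆ (⊥ : SimpleGraph V).edgeSet ∧ ReachesAll (Sym2.ToRel S ⊔ r) v0}.ncard := by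
  have hO : ∀ O : GraphOrientation (⊥ : SimpleGraph V), O.dir ⊔ r = r := fun O => by
    rw [Unique.eq_default O]
    exact bot_sup_eq r
  have hS : {S | S ⊆ (⊥ : SimpleGraph V).edgeSet ∧ ReachesAll (Sym2.ToRel S ⊔ r) v0} =
      {S | S = ∅ ∧ ReachesAll r v0} := by
    refine Set.ext fun S => ?_
    simp only [SimpleGraph.edgeSet_bot, Set.subset_empty_iff, Set.mem_ofPred_eq]
    refine and_congr_right fun hS => ?_
    subst hS
    rw [show Sym2.ToRel (∅ : Set (Sym2 V)) = ⊥ by ext; simp [Sym2.toRel_prop], bot_sup_eq]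
  rw [hS]
  by_cases h : ReachesAll r v0 <;> simp [hO, h]

theorem ncard_orientations_reachesAll_eq_ncard_subsets [Finite V] (G : SimpleGraph V)
    (r : V → V → Prop) (v0 : V) :
    {O : GraphOrientation G | ReachesAll (O.dir ⊔ r) v0}.ncard =
      {S | S ⊆ G.edgeSet ∧ ReachesAll (Sym2.ToRel S ⊔ r) v0}.ncard := by
  induction hn : G.edgeSet.ncard generalizing G r with
  | zero =>
    obtain rfl : G = ⊥ := SimpleGraph.edgeSet_eq_empty.mp ((Set.ncard_eq_zero).mp hn)
    exact ncard_orientations_reachesAll_eq_ncard_subsets_bot r v0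
  | succ n ih =>
    obtain ⟨e, he⟩ := Set.nonempty_of_ncard_ne_zero (s := G.edgeSet) (by omega)
    induction e using Sym2.ind with | _ u v => ?_
    have hn' : (G.deleteEdges {s(u, v)}).edgeSet.ncard = n := by
      rw [SimpleGraph.edgeSet_deleteEdges, Set.ncard_sdiff_singleton_of_mem he, hn]
      rfl
    rw [GraphOrientation.ncard_reachesAll_eq_add he,
      SimpleGraph.ncard_subsets_reachesAll_eq_add he, ih _ _ hn', ih _ _ hn']

theorem SimpleGraph.fromEdgeSet_connected_iff_reachesAll {S : Set (Sym2 V)}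
    (hS : ∀ e ∈ S, ¬ e.IsDiag) (v0 : V) :
    (fromEdgeSet S).Connected ↔ ReachesAll (Sym2.ToRel S) v0 := by
  have hadj : (fromEdgeSet S).Adj = Sym2.ToRel S := by
    ext a b
    simp only [fromEdgeSet_adj, Sym2.toRel_prop, and_iff_left_iff_imp]
    exact fun hab h => hS _ hab (Sym2.mk_isDiag_iff.mpr h)
  rw [connected_iff_exists_forall_reachable]
  trans ∀ w, (fromEdgeSet S).Reachable v0 w
  · exact ⟨fun ⟨v, hv⟩ w => (hv v0).symm.trans (hv w), fun h => ⟨v0, h⟩⟩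
  · simp only [reachable_iff_reflTransGen, hadj]
    rfl

end

theorem statement12_general {V : Type*} [Fintype V] (G : SimpleGraph V) (v0 : V) :
    {O : GraphOrientation G | O.IsConnectedFrom v0}.ncard =
      {S : Set (Sym2 V) | S ⊆ G.edgeSet ∧ (SimpleGraph.fromEdgeSet S).Connected}.ncard := by
  have key := ncard_orientations_reachesAll_eq_ncard_subsets G ⊥ v0
  simp only [sup_bot_eq] at key
  refine key.trans (congrArg Set.ncard (Set.ext fun S => and_congr_right fun hS => ?_))
  exact (SimpleGraph.fromEdgeSet_connected_iff_reachesAll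
    (fun e he => G.not_isDiag_of_mem_edgeSet (hS he)) v0).symm

theorem statement12 {V : Type*} [Fintype V] (G : SimpleGraph V) (hG : G.Connected)
    (v0 : V) :
    {O : GraphOrientation G | O.IsConnectedFrom v0}.ncard =
      {S : Set (Sym2 V) | S ⊆ G.edgeSet ∧ (SimpleGraph.fromEdgeSet S).Connected}.ncard :=
  statement12_general G v0
end
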